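/- arXiv:1102.2971 — 2 statements merged into one kernel-verified Lean document; each statement's English description precedes it below -/
import Mathlib

section
/- Let D be a positive odd squarefree integer. Then E_D(-2,1) + E_D(-1,2) ≤ 2·E_D(2,1) ≤ 2·E_D(-2,1) + 2·E_D(-1,2), where E_D(u,v) = #{(a,b): D = ab, ua ≡ □ (mod b), vb ≡ □ (mod a)}. -/
open Finset

/-- `E_D(u,v)`: number of pairs `(a,b)` of positive integers with `D = a*b`,
`u*a` a square mod `b` and `v*b` a square mod `a`. -/
noncomputable def Ecard (D : ℕ) (u v : ℤ) : ℕ :=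
  Set.ncard {p : ℕ × ℕ | 0 < p.1 ∧ 0 < p.2 ∧ p.1 * p.2 = D ∧
    (∃ n : ℤ, u * p.1 ≡ n ^ 2 [ZMOD (p.2 : ℤ)]) ∧
    (∃ n : ℤ, v * p.2 ≡ n ^ 2 [ZMOD (p.1 : ℤ)])}

/-- `σ_D(s,t,u,v)`. -/
def sigmaSum (D : ℕ) (s t u v : ℤ) : ℤ :=
  ∑ a ∈ D.divisors,
    (∏ p ∈ (D / a).primeFactors, (jacobiSym s p + jacobiSym (u * a) p)) *
    (∏ p ∈ a.primeFactors, (jacobiSym t p + jacobiSym (v * (D / a)) p))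

/-- `S_D(u,v) = σ_D(1,1,u,v)`. -/
def Ssum (D : ℕ) (u v : ℤ) : ℤ :=
  ∑ a ∈ D.divisors,
    (∏ p ∈ (D / a).primeFactors, (1 + jacobiSym (u * a) p)) *
    (∏ p ∈ a.primeFactors, (1 + jacobiSym (v * (D / a)) p))


section LinAlg
open Matrix Set

set_option linter.unusedSectionVars false
variable {n : Type*} [Fintype n] [DecidableEq n]

abbrev F2 := ZMod 2

/-- solution set -/
def sol (M : Matrix n n F2) (c : n → F2) : Set (n → F2) := {x | M *ᵥ x = c}

lemma ncard_sol_of_nonempty (M : Matrix n n F2) (c : n → F2) (h : (sol M c).Nonempty) :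
    (sol M c).ncard = (sol M 0).ncard := by
  obtain ⟨x₀, hx₀⟩ := h
  have : sol M c = (fun y => y + x₀) '' sol M 0 := by
    ext y
    constructor
    · intro hy
      simp only [sol, Set.mem_setOf_eq] at hy hx₀
      exact ⟨y - x₀, by simp [sol, mulVec_sub, hy, hx₀], by simp⟩
    · rintro ⟨z, hz, rfl⟩
      simp only [sol, Set.mem_setOf_eq] at hz hx₀ ⊢
      simp [mulVec_add, hz, hx₀]
  rw [this, Set.ncard_image_of_injOn (fun a _ b _ h => by simpa using congrArg (· - x₀) h)]

lemma solvable_iff (M : Matrix n n F2) (c : n → F2) :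
    (∃ x, M *ᵥ x = c) ↔ ∀ y, Mᵀ *ᵥ y = 0 → c ⬝ᵥ y = 0 := by
  constructor
  · rintro ⟨x, rfl⟩ y hy
    have : (M *ᵥ x) ⬝ᵥ y = x ⬝ᵥ (Mᵀ *ᵥ y) := by
      rw [mulVec_transpose, dotProduct_comm (M *ᵥ x) y, Matrix.dotProduct_mulVec,
        dotProduct_comm]
    rw [this, hy]
    simp
  · intro h
    by_contra hne
    have hc : c ∉ LinearMap.range M.mulVecLin := by
      intro ⟨x, hx⟩; exact hne ⟨x, by simpa [Matrix.mulVecLin_apply] using hx⟩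
    set W := LinearMap.range M.mulVecLin
    have hq : W.mkQ c ≠ 0 := by
      simpa [Submodule.Quotient.mk_eq_zero] using hc
    obtain ⟨φ, hφ⟩ : ∃ φ : Module.Dual F2 ((n → F2) ⧸ W), φ (W.mkQ c) ≠ 0 := by
      by_contra hall
      push_neg at hall
      exact hq ((Module.forall_dual_apply_eq_zero_iff F2 _).mp hall)
    set ψ : (n → F2) →ₗ[F2] F2 := φ.comp W.mkQ with hψdef
    have hψr : ∀ x, ψ (M *ᵥ x) = 0 := by
      intro x
      have : M *ᵥ x ∈ W := ⟨x, by simp [Matrix.mulVecLin_apply]⟩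
      simp [hψdef, (Submodule.Quotient.mk_eq_zero W).mpr this, Submodule.mkQ_apply]
    set y : n → F2 := fun i => ψ (Pi.single i (1:F2)) with hydef
    have hrep : ∀ v : n → F2, ψ v = v ⬝ᵥ y := by
      intro v
      conv_lhs => rw [← Finset.univ_sum_single v]
      rw [map_sum]
      apply Finset.sum_congr rfl
      intro i _
      have : Pi.single i (v i) = v i • (Pi.single i (1 : F2) : n → F2) := by
        funext j
        by_cases h : j = i <;> simp [Pi.single_apply, h]
      rw [this, LinearMap.map_smul, smul_eq_mul, hydef]
    have hyk : Mᵀ *ᵥ y = 0 := by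
      funext q
      have h1 : ψ (M *ᵥ Pi.single q (1:F2)) = 0 := hψr _
      rw [hrep, Matrix.mulVec_single] at h1
      simpa [Matrix.mulVec, dotProduct, Matrix.transpose_apply, mul_comm] using h1
    have := h y hyk
    rw [← hrep] at this
    exact hφ this

lemma ncard_ker_transpose (M : Matrix n n F2) :
    (sol M 0).ncard = (sol Mᵀ 0).ncard := by
  have hker : ∀ N : Matrix n n F2, (sol N 0) = (LinearMap.ker N.mulVecLin : Set (n → F2)) := by
    intro N; ext x; simp [sol, LinearMap.mem_ker, Matrix.mulVecLin_apply]
  have hfr : Module.finrank F2 (LinearMap.ker M.mulVecLin)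
      = Module.finrank F2 (LinearMap.ker Mᵀ.mulVecLin) := by
    have h1 := LinearMap.finrank_range_add_finrank_ker (M.mulVecLin)
    have h2 := LinearMap.finrank_range_add_finrank_ker (Mᵀ.mulVecLin)
    have h3 : Mᵀ.rank = M.rank := Matrix.rank_transpose M
    unfold Matrix.rank at h3
    omega
  obtain ⟨e⟩ := FiniteDimensional.nonempty_linearEquiv_of_finrank_eq hfr
  rw [hker, hker, ← Nat.card_coe_set_eq, ← Nat.card_coe_set_eq]
  exact Nat.card_congr e.toEquiv

lemma zmod2_cases : ∀ a : F2, a = 0 ∨ a = 1 := by decide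

lemma f2_add_self (a : F2) : a + a = 0 := by revert a; decide

lemma vec_add_self (v : n → F2) : v + v = 0 := by
  funext i; exact f2_add_self (v i)

lemma subgroup_split (S : Set (n → F2)) (ε : n → F2) :
    S.ncard = (S ∩ {x | ε ⬝ᵥ x = 0}).ncard + (S ∩ {x | ε ⬝ᵥ x = 1}).ncard := by
  rw [← Set.ncard_union_eq]
  · congr 1
    ext x
    simp only [Set.mem_union, Set.mem_inter_iff, Set.mem_setOf_eq]
    rcases zmod2_cases (ε ⬝ᵥ x) with h | h <;> simp [h] <;> tauto
  · rw [Set.disjoint_iff]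
    rintro x ⟨⟨-, h0⟩, -, h1⟩
    simp only [Set.mem_setOf_eq] at h0 h1
    rw [h0] at h1; exact absurd h1 (by decide)

lemma subgroup_swap (S : Set (n → F2)) (hS : ∀ x ∈ S, ∀ y ∈ S, x + y ∈ S)
    (ε : n → F2) (z : n → F2) (hz : z ∈ S) (hz1 : ε ⬝ᵥ z = 1) :
    (S ∩ {x | ε ⬝ᵥ x = 1}).ncard = (S ∩ {x | ε ⬝ᵥ x = 0}).ncard := by
  have himg : S ∩ {x | ε ⬝ᵥ x = 1} = (fun x => x + z) '' (S ∩ {x | ε ⬝ᵥ x = 0}) := by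
    ext y
    constructor
    · rintro ⟨hyS, hy1⟩
      refine ⟨y + z, ⟨hS _ hyS _ hz, ?_⟩, ?_⟩
      · simp only [Set.mem_setOf_eq] at hy1 ⊢
        rw [dotProduct_add, hy1, hz1]; decide
      · show y + z + z = y
        rw [add_assoc, vec_add_self, add_zero]
    · rintro ⟨x, ⟨hxS, hx0⟩, rfl⟩
      refine ⟨hS _ hxS _ hz, ?_⟩
      simp only [Set.mem_setOf_eq] at hx0 ⊢
      rw [dotProduct_add, hx0, hz1]; decide
  rw [himg, Set.ncard_image_of_injOn (fun a _ b _ h => by simpa using congrArg (· - z) h)]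

lemma subgroup_le_two_mul (S : Set (n → F2)) (hS : ∀ x ∈ S, ∀ y ∈ S, x + y ∈ S)
    (ε : n → F2) : S.ncard ≤ 2 * (S ∩ {x | ε ⬝ᵥ x = 0}).ncard := by
  rw [subgroup_split S ε]
  rcases Set.eq_empty_or_nonempty (S ∩ {x | ε ⬝ᵥ x = 1}) with h | ⟨z, hzS, hz1⟩
  · rw [h, Set.ncard_empty]; omega
  · rw [subgroup_swap S hS ε z hzS hz1]; omega

lemma abstract_ineq (A : Matrix n n F2) (ε δ : n → F2)
    (h1 : A *ᵥ 1 = ε + δ)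
    (h3 : Aᵀ = A + Matrix.vecMulVec ε ε + Matrix.diagonal ε) :
    ((sol A (ε + δ)).ncard + (sol A ε).ncard ≤ 2 * (sol (A + Matrix.diagonal ε) δ).ncard) ∧
      (sol (A + Matrix.diagonal ε) δ).ncard ≤ (sol A (ε + δ)).ncard + (sol A ε).ncard := by
  set B := A + Matrix.diagonal ε with hBdef
  -- pointwise identities
  have hvmv : ∀ x : n → F2, Matrix.vecMulVec ε ε *ᵥ x = (ε ⬝ᵥ x) • ε := by
    intro x; funext i
    simp [Matrix.vecMulVec, Matrix.mulVec, dotProduct, Finset.mul_sum, mul_comm, mul_left_comm]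
  have hdiag : ∀ x : n → F2, Matrix.diagonal ε *ᵥ x = ε * x := by
    intro x; funext i; simp [Matrix.mulVec_diagonal]
  have hBeq : B = Aᵀ + Matrix.vecMulVec ε ε := by
    rw [h3, hBdef]
    ext i j
    simp only [Matrix.add_apply]
    rw [add_assoc (A i j), add_comm (Matrix.vecMulVec ε ε i j), ← add_assoc (A i j),
      add_assoc, f2_add_self, add_zero]
  have hB : ∀ x, B *ᵥ x = Aᵀ *ᵥ x + (ε ⬝ᵥ x) • ε := by
    intro x; rw [hBeq, Matrix.add_mulVec, hvmv]
  have hAT : ∀ x, Aᵀ *ᵥ x = A *ᵥ x + (ε ⬝ᵥ x) • ε + ε * x := by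
    intro x; rw [h3, Matrix.add_mulVec, Matrix.add_mulVec, hvmv, hdiag]
  have hBT : ∀ x, Bᵀ *ᵥ x = A *ᵥ x + (ε ⬝ᵥ x) • ε := by
    intro x
    rw [hBeq, Matrix.transpose_add, Matrix.transpose_transpose, Matrix.add_mulVec,
      show (Matrix.vecMulVec ε ε)ᵀ = Matrix.vecMulVec ε ε by
        ext i j; simp [Matrix.vecMulVec, mul_comm], hvmv]
  -- X is nonempty with solution 1
  have hXne : (sol A (ε + δ)).Nonempty := ⟨1, h1⟩
  have hX : (sol A (ε + δ)).ncard = (sol A 0).ncard := ncard_sol_of_nonempty A _ hXne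
  have hKA : (sol A 0).ncard = (sol Aᵀ 0).ncard := ncard_ker_transpose A
  -- kernels are closed under addition
  have hclosed : ∀ (M : Matrix n n F2), ∀ x ∈ sol M 0, ∀ y ∈ sol M 0, x + y ∈ sol M 0 := by
    intro M x hx y hy
    simp only [sol, Set.mem_setOf_eq] at *
    rw [Matrix.mulVec_add, hx, hy, add_zero]
  -- Z is nonempty
  have hZne : ∃ x, B *ᵥ x = δ := by
    rw [solvable_iff]
    intro y hy
    rw [hBT] at hy
    -- A *ᵥ y = (ε ⬝ᵥ y) • ε  (char 2)
    have hAy : A *ᵥ y = (ε ⬝ᵥ y) • ε := by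
      have := congrArg (· + (ε ⬝ᵥ y) • ε) hy
      simpa [add_assoc, vec_add_self] using this
    have hATy : Aᵀ *ᵥ y = ε * y := by
      rw [hAT, hAy, vec_add_self, zero_add]
    have key : (ε + δ) ⬝ᵥ y = ε ⬝ᵥ y := by
      calc (ε + δ) ⬝ᵥ y = (A *ᵥ 1) ⬝ᵥ y := by rw [h1]
        _ = (1 : n → F2) ⬝ᵥ (Aᵀ *ᵥ y) := by
            rw [Matrix.dotProduct_mulVec, Matrix.vecMul_transpose]
        _ = (1 : n → F2) ⬝ᵥ (ε * y) := by rw [hATy]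
        _ = ε ⬝ᵥ y := by simp [dotProduct, Matrix.mulVec]
    rw [add_dotProduct] at key
    linear_combination key
  have hZ : (sol B δ).ncard = (sol B 0).ncard := ncard_sol_of_nonempty B _ hZne
  -- case split on solvability of A x = ε
  by_cases hY : ∃ x, A *ᵥ x = ε
  · -- Y = KA case
    have hYn : (sol A ε).ncard = (sol A 0).ncard := ncard_sol_of_nonempty A _ hY
    have hperp : ∀ y, Aᵀ *ᵥ y = 0 → ε ⬝ᵥ y = 0 := (solvable_iff A ε).mp hY
    -- ker Aᵀ ⊆ ker B
    have hsub : sol Aᵀ 0 ⊆ sol B 0 := by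
      intro y hy
      simp only [sol, Set.mem_setOf_eq] at hy ⊢
      rw [hB, hy, hperp y hy, zero_smul, add_zero]
    have hle1 : (sol Aᵀ 0).ncard ≤ (sol B 0).ncard :=
      Set.ncard_le_ncard hsub (Set.toFinite _)
    -- ker B ∩ ε-perp ⊆ ker Aᵀ
    have hsub2 : sol B 0 ∩ {x | ε ⬝ᵥ x = 0} ⊆ sol Aᵀ 0 := by
      rintro y ⟨hy, hy0⟩
      simp only [sol, Set.mem_setOf_eq] at hy hy0 ⊢
      have := hB y
      rw [hy, hy0, zero_smul, add_zero] at this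
      exact this.symm
    have hle2 : (sol B 0).ncard ≤ 2 * (sol Aᵀ 0).ncard := by
      calc (sol B 0).ncard ≤ 2 * (sol B 0 ∩ {x | ε ⬝ᵥ x = 0}).ncard :=
            subgroup_le_two_mul _ (hclosed B) ε
        _ ≤ 2 * (sol Aᵀ 0).ncard := by
            have := Set.ncard_le_ncard hsub2 (Set.toFinite _); omega
    constructor
    · rw [hX, hYn, hZ]; omega
    · rw [hX, hYn, hZ]; omega
  · -- Y = 0 case
    have hYn : (sol A ε).ncard = 0 := by
      have : sol A ε = ∅ := by
        ext x; simp only [sol, Set.mem_setOf_eq, Set.mem_empty_iff_false, iff_false]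
        exact fun hx => hY ⟨x, hx⟩
      rw [this, Set.ncard_empty]
    obtain ⟨z, hz, hz1⟩ : ∃ z, Aᵀ *ᵥ z = 0 ∧ ε ⬝ᵥ z = 1 := by
      rw [solvable_iff] at hY
      push_neg at hY
      obtain ⟨z, hz0, hz1⟩ := hY
      exact ⟨z, hz0, (zmod2_cases _).resolve_left hz1⟩
    -- U = ker Aᵀ ∩ ε-perp = ker B ∩ ε-perp
    have hU : sol Aᵀ 0 ∩ {x | ε ⬝ᵥ x = 0} = sol B 0 ∩ {x | ε ⬝ᵥ x = 0} := by
      ext y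
      simp only [Set.mem_inter_iff, sol, Set.mem_setOf_eq]
      constructor
      · rintro ⟨hy, hy0⟩
        exact ⟨by rw [hB, hy, hy0, zero_smul, add_zero], hy0⟩
      · rintro ⟨hy, hy0⟩
        refine ⟨?_, hy0⟩
        have := hB y
        rw [hy, hy0, zero_smul, add_zero] at this
        exact this.symm
    have hKAT : (sol Aᵀ 0).ncard = 2 * (sol Aᵀ 0 ∩ {x | ε ⬝ᵥ x = 0}).ncard := by
      rw [subgroup_split (sol Aᵀ 0) ε,
        subgroup_swap (sol Aᵀ 0) (hclosed Aᵀ) ε z hz hz1]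
      omega
    have hUB : sol Aᵀ 0 ∩ {x | ε ⬝ᵥ x = 0} ⊆ sol B 0 := by
      rw [hU]; exact Set.inter_subset_left
    have hle1 : (sol Aᵀ 0 ∩ {x | ε ⬝ᵥ x = 0}).ncard ≤ (sol B 0).ncard :=
      Set.ncard_le_ncard hUB (Set.toFinite _)
    have hle2 : (sol B 0).ncard ≤ 2 * (sol Aᵀ 0 ∩ {x | ε ⬝ᵥ x = 0}).ncard := by
      calc (sol B 0).ncard ≤ 2 * (sol B 0 ∩ {x | ε ⬝ᵥ x = 0}).ncard :=
            subgroup_le_two_mul _ (hclosed B) ε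
        _ = 2 * (sol Aᵀ 0 ∩ {x | ε ⬝ᵥ x = 0}).ncard := by rw [hU]
    constructor
    · rw [hX, hYn, hZ]; omega
    · rw [hX, hYn, hZ]; omega

end LinAlg

section NT




/-- Legendre/Jacobi log: 0 if `jacobiSym m p = 1`, else 1. -/
def lg (m : ℤ) (p : ℕ) : F2 := if jacobiSym m p = 1 then 0 else 1

lemma lg_one (p : ℕ) : lg 1 p = 0 := by simp [lg, jacobiSym.one_left]

lemma jacobi_pm (m : ℤ) (p : ℕ) (h : Int.gcd m p = 1) :
    jacobiSym m p = 1 ∨ jacobiSym m p = -1 :=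
  (jacobiSym.trichotomy m p).resolve_left (jacobiSym.ne_zero h)

lemma lg_eq_zero_iff (m : ℤ) (p : ℕ) (h : Int.gcd m p = 1) :
    lg m p = 0 ↔ jacobiSym m p = 1 := by
  rcases jacobi_pm m p h with h1 | h1 <;> simp [lg, h1]

lemma lg_mul (m m' : ℤ) (p : ℕ) (hm : Int.gcd m p = 1) (hm' : Int.gcd m' p = 1) :
    lg (m * m') p = lg m p + lg m' p := by
  unfold lg
  rw [jacobiSym.mul_left]
  rcases jacobi_pm m p hm with h1 | h1 <;> rcases jacobi_pm m' p hm' with h2 | h2 <;>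
    simp [h1, h2] <;> decide

lemma lg_prod (p : ℕ) (s : Finset ℕ) (h : ∀ q ∈ s, Int.gcd (q : ℤ) p = 1) :
    lg (∏ q ∈ s, (q : ℤ)) p = ∑ q ∈ s, lg (q : ℤ) p := by
  classical
  induction s using Finset.induction_on with
  | empty => simpa using lg_one p
  | @insert a s' ha ih =>
    rw [Finset.prod_insert ha, Finset.sum_insert ha,
      lg_mul _ _ _ (h a (Finset.mem_insert_self a s')) ?_,
      ih (fun q hq' => h q (Finset.mem_insert_of_mem hq'))]
    · rw [Int.gcd]
      have : ∀ q ∈ s', IsCoprime ((q:ℤ)) (p:ℤ) := by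
        intro q hq'
        rw [Int.isCoprime_iff_gcd_eq_one]
        exact h q (Finset.mem_insert_of_mem hq')
      have := IsCoprime.prod_left (fun q hq' => this q hq')
      rwa [Int.isCoprime_iff_gcd_eq_one] at this

lemma sq_mod_prime (p : ℕ) (hp : p.Prime) (m : ℤ) (hcop : IsCoprime m (p : ℤ)) :
    (∃ n : ℤ, m ≡ n ^ 2 [ZMOD (p : ℤ)]) ↔ jacobiSym m p = 1 := by
  haveI : Fact p.Prime := ⟨hp⟩
  rw [← jacobiSym.legendreSym.to_jacobiSym]
  have hm0 : ((m : ZMod p) : ZMod p) ≠ 0 := by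
    rw [Ne, ZMod.intCast_zmod_eq_zero_iff_dvd]
    intro h
    have hpz : Prime (p : ℤ) := Int.prime_iff_natAbs_prime.mpr (by simpa using hp)
    exact hpz.not_unit (hcop.isUnit_of_dvd' h dvd_rfl)
  rw [legendreSym.eq_one_iff p hm0]
  constructor
  · rintro ⟨n, hn⟩
    refine ⟨(n : ZMod p), ?_⟩
    rw [← ZMod.intCast_eq_intCast_iff] at hn
    rw [hn]; push_cast; ring
  · rintro ⟨r, hr⟩
    obtain ⟨n, rfl⟩ := ZMod.intCast_surjective r
    refine ⟨n, ?_⟩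
    rw [← ZMod.intCast_eq_intCast_iff]
    rw [hr]; push_cast; ring

/-- squares mod an odd squarefree number are detected by Jacobi symbols at each prime -/
lemma sq_mod_iff : ∀ (b : ℕ), Squarefree b → Odd b → ∀ (m : ℤ), IsCoprime m (b : ℤ) →
    ((∃ n : ℤ, m ≡ n ^ 2 [ZMOD (b : ℤ)]) ↔ ∀ p ∈ b.primeFactors, jacobiSym m p = 1) := by
  intro b
  induction b using Nat.strong_induction_on with
  | _ b ih =>
    intro hsq hodd m hcop
    rcases eq_or_lt_of_le (Nat.one_le_iff_ne_zero.mpr hsq.ne_zero) with hb1 | hb1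
    · simp only [← hb1]
      constructor
      · intro _ q hq; simp at hq
      · intro _; exact ⟨0, by simpa using Int.modEq_one⟩
    · -- b > 1
      set p := b.minFac with hpdef
      have hp : p.Prime := Nat.minFac_prime (by omega)
      have hpb : p ∣ b := Nat.minFac_dvd b
      set c := b / p with hcdef
      have hbc : b = p * c := (Nat.mul_div_cancel' hpb).symm
      have hb0 : b ≠ 0 := hsq.ne_zero
      have hc0 : c ≠ 0 := by intro h; rw [h, mul_zero] at hbc; omega
      have hsplit := hsq
      rw [hbc, Nat.squarefree_mul_iff] at hsplit
      obtain ⟨hcp, hsqp, hsqc⟩ := hsplit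
      have hoddc : Odd c := hodd.of_dvd_nat ⟨p, by rw [hbc]; ring⟩
      have hoddp : Odd p := hodd.of_dvd_nat hpb
      have hclt : c < b := by
        rw [hcdef]
        exact Nat.div_lt_self (by omega) hp.one_lt
      have hcdvd : c ∣ b := ⟨p, by rw [hbc]; ring⟩
      have hcopc : IsCoprime m (c : ℤ) :=
        hcop.of_isCoprime_of_dvd_right (Int.natCast_dvd_natCast.mpr hcdvd)
      have hcopp : IsCoprime m (p : ℤ) :=
        hcop.of_isCoprime_of_dvd_right (Int.natCast_dvd_natCast.mpr hpb)
      have ihc := ih c hclt hsqc hoddc m hcopc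
      have ihp := sq_mod_prime p hp m hcopp
      -- CRT equivalence
      have hcrt : (∃ n : ℤ, m ≡ n ^ 2 [ZMOD (b : ℤ)]) ↔
          ((∃ n : ℤ, m ≡ n ^ 2 [ZMOD (p : ℤ)]) ∧ (∃ n : ℤ, m ≡ n ^ 2 [ZMOD (c : ℤ)])) := by
        constructor
        · rintro ⟨n, hn⟩
          constructor
          · exact ⟨n, hn.of_dvd (Int.natCast_dvd_natCast.mpr hpb)⟩
          · exact ⟨n, hn.of_dvd (Int.natCast_dvd_natCast.mpr hcdvd)⟩
        · rintro ⟨⟨n₁, hn₁⟩, ⟨n₂, hn₂⟩⟩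
          obtain ⟨u, v, huv⟩ := (Nat.isCoprime_iff_coprime.mpr hcp)
          set n : ℤ := n₂ * u * p + n₁ * v * c with hndef
          have hnp : n ≡ n₁ [ZMOD (p : ℤ)] := by
            rw [Int.modEq_iff_dvd]
            exact ⟨(n₁ - n₂) * u, by linear_combination (-n₁) * huv⟩
          have hnc : n ≡ n₂ [ZMOD (c : ℤ)] := by
            rw [Int.modEq_iff_dvd]
            exact ⟨(n₂ - n₁) * v, by linear_combination (-n₂) * huv⟩
          refine ⟨n, ?_⟩
          have hmp : m ≡ n ^ 2 [ZMOD (p : ℤ)] := hn₁.trans (hnp.pow 2).symm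
          have hmc : m ≡ n ^ 2 [ZMOD (c : ℤ)] := hn₂.trans (hnc.pow 2).symm
          have := (Int.modEq_and_modEq_iff_modEq_mul
            (a := m) (b := n ^ 2) (m := (p : ℤ)) (n := (c : ℤ))
            (by simpa using hcp)).mp ⟨hmp, hmc⟩
          rw [hbc]
          push_cast
          exact this
      have hpf : b.primeFactors = insert p c.primeFactors := by
        rw [hbc, Nat.primeFactors_mul hp.ne_zero hc0, Nat.Prime.primeFactors hp]
        rfl
      rw [hcrt, ihc, ihp, hpf]
      rw [Finset.forall_mem_insert]

lemma lg_neg_one_eq (p : ℕ) (hodd : Odd p) :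
    lg (-1) p = if p % 4 = 1 then 0 else 1 := by
  have h2 : p % 2 = 1 := Nat.odd_iff.mp hodd
  have : jacobiSym (-1) p = (if p % 4 = 1 then 1 else -1 : ℤ) := by
    rw [jacobiSym.at_neg_one hodd, ZMod.χ₄_nat_eq_if_mod_four]
    simp [h2]
  unfold lg
  rw [this]
  by_cases h : p % 4 = 1 <;> simp [h]

lemma lg_reciprocity (p q : ℕ) (hp : p.Prime) (hq : q.Prime)
    (hop : Odd p) (hoq : Odd q) (hne : p ≠ q) :
    lg (p : ℤ) q = lg (q : ℤ) p + lg (-1) p * lg (-1) q := by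
  have hco : Nat.Coprime p q := (Nat.coprime_primes hp hq).mpr hne
  have hgcd1 : Int.gcd (q : ℤ) p = 1 := by
    rw [Int.gcd_natCast_natCast]; exact hco.symm
  have hgcd2 : Int.gcd (p : ℤ) q = 1 := by
    rw [Int.gcd_natCast_natCast]; exact hco
  have hQR := jacobiSym.quadratic_reciprocity hop hoq
  have h2p : p % 2 = 1 := Nat.odd_iff.mp hop
  have h2q : q % 2 = 1 := Nat.odd_iff.mp hoq
  have hp4 : p % 4 = 1 ∨ p % 4 = 3 := by omega
  have hq4 : q % 4 = 1 ∨ q % 4 = 3 := by omega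
  rw [lg_neg_one_eq p hop, lg_neg_one_eq q hoq]
  rcases hp4 with hp4 | hp4 <;> rcases hq4 with hq4 | hq4
  · -- both 1 mod 4
    have : Even (p / 2 * (q / 2)) := (Nat.even_mul).mpr (Or.inl (Nat.even_iff.mpr (by omega)))
    rw [this.neg_one_pow, one_mul] at hQR
    simp only [hp4, hq4, if_pos rfl]
    unfold lg
    rw [hQR]
    simp
  · have : Even (p / 2 * (q / 2)) := (Nat.even_mul).mpr (Or.inl (Nat.even_iff.mpr (by omega)))
    rw [this.neg_one_pow, one_mul] at hQR
    simp only [hp4, hq4]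
    unfold lg
    rw [hQR]
    simp
  · have : Even (p / 2 * (q / 2)) := (Nat.even_mul).mpr (Or.inr (Nat.even_iff.mpr (by omega)))
    rw [this.neg_one_pow, one_mul] at hQR
    simp only [hp4, hq4]
    unfold lg
    rw [hQR]
    simp
  · have : Odd (p / 2 * (q / 2)) := (Nat.odd_mul).mpr ⟨Nat.odd_iff.mpr (by omega), Nat.odd_iff.mpr (by omega)⟩
    rw [this.neg_one_pow] at hQR
    simp only [hp4, hq4]
    norm_num
    unfold lg
    rw [hQR]
    rcases jacobi_pm (q : ℤ) p hgcd1 with h | h <;> rw [h] <;> norm_num <;> decide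

end NT


section Translation

open Matrix

variable (D : ℕ)

/-- encode a pair as an F2 vector indexed by primes of `D` -/
def Phi (ab : ℕ × ℕ) : {p // p ∈ D.primeFactors} → F2 :=
  fun p => if p.1 ∣ ab.1 then 1 else 0

/-- the Monsky-type matrix of the system for `E_D(u,v)` -/
def EMat (u v : ℤ) : Matrix {p // p ∈ D.primeFactors} {p // p ∈ D.primeFactors} F2 :=
  fun p q => if q = p then lg u p.1 + lg v p.1 + ∑ r ∈ D.primeFactors.erase p.1, lg (r : ℤ) p.1
    else lg (q.1 : ℤ) p.1

def rhsVec (u : ℤ) : {p // p ∈ D.primeFactors} → F2 := fun p => lg u p.1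

variable {D}

lemma gcd_prime_prime {r p : ℕ} (hr : r.Prime) (hp : p.Prime) (h : r ≠ p) :
    Int.gcd (r : ℤ) p = 1 := by
  rw [Int.gcd_natCast_natCast]
  exact (Nat.coprime_primes hr hp).mpr h

lemma primeFactors_filter_eq {c : ℕ} (hD0 : D ≠ 0) (hc : c ∣ D) (hc0 : c ≠ 0) :
    D.primeFactors.filter (· ∣ c) = c.primeFactors := by
  ext r
  simp only [Finset.mem_filter, Nat.mem_primeFactors]
  constructor
  · rintro ⟨⟨hr, -, -⟩, hrc⟩
    exact ⟨hr, hrc, hc0⟩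
  · rintro ⟨hr, hrc, -⟩
    exact ⟨⟨hr, hrc.trans hc, hD0⟩, hrc⟩

lemma lg_eq_sum (hD0 : D ≠ 0) (hsq : Squarefree D) {c p : ℕ} (hc : c ∣ D) (hc0 : c ≠ 0)
    (hp : p.Prime) (hpc : ¬ p ∣ c) :
    lg (c : ℤ) p = ∑ r ∈ D.primeFactors.filter (· ∣ c), lg (r : ℤ) p := by
  have hsqc : Squarefree c := hsq.squarefree_of_dvd hc
  rw [primeFactors_filter_eq hD0 hc hc0, ← lg_prod]
  · congr 1
    rw [← Nat.cast_prod, Nat.prod_primeFactors_of_squarefree hsqc]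
  · intro r hr
    rw [Nat.mem_primeFactors] at hr
    exact gcd_prime_prime hr.1 hp (fun h => hpc (h ▸ hr.2.1))

/-- per-prime translation of the quadratic residue conditions to a linear equation -/
lemma mulVec_Phi (hD : Odd D) (hsq : Squarefree D)
    (u v : ℤ) (hu : IsCoprime u (D : ℤ)) (hv : IsCoprime v (D : ℤ))
    (a b : ℕ) (ha : 0 < a) (hb : 0 < b) (hab : a * b = D)
    (p : {p // p ∈ D.primeFactors}) :
    ((EMat D u v *ᵥ Phi D (a, b)) p = rhsVec D u p) ↔
      ((p.1 ∣ a → lg (v * (b : ℤ)) p.1 = 0) ∧ (p.1 ∣ b → lg (u * (a : ℤ)) p.1 = 0)) := by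
  have hD0 : D ≠ 0 := hsq.ne_zero
  obtain ⟨pp, pdvd, -⟩ := Nat.mem_primeFactors.mp p.2
  have podd : Odd p.1 := hD.of_dvd_nat pdvd
  have hsq' : Squarefree (a * b) := hab ▸ hsq
  have hcoab : Nat.Coprime a b := (Nat.squarefree_mul_iff.mp hsq').1
  have hsqa : Squarefree a := (Nat.squarefree_mul_iff.mp hsq').2.1
  have hsqb : Squarefree b := (Nat.squarefree_mul_iff.mp hsq').2.2
  have hadvd : a ∣ D := hab ▸ Dvd.intro b rfl
  have hbdvd : b ∣ D := hab ▸ Dvd.intro_left a rfl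
  have hup : Int.gcd u p.1 = 1 := Int.isCoprime_iff_gcd_eq_one.mp
    (hu.of_isCoprime_of_dvd_right (Int.natCast_dvd_natCast.mpr pdvd))
  have hvp : Int.gcd v p.1 = 1 := Int.isCoprime_iff_gcd_eq_one.mp
    (hv.of_isCoprime_of_dvd_right (Int.natCast_dvd_natCast.mpr pdvd))
  -- the two cases are exclusive
  have hdvd_or : p.1 ∣ a ∨ p.1 ∣ b := (Nat.Prime.dvd_mul pp).mp (hab ▸ pdvd)
  have hnotboth : ¬ (p.1 ∣ a ∧ p.1 ∣ b) := by
    rintro ⟨h1, h2⟩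
    exact pp.one_lt.ne' (Nat.eq_one_of_dvd_coprimes hcoab h1 h2)
  -- compute the matrix-vector entry
  set Sp : F2 := ∑ r ∈ D.primeFactors.erase p.1, lg (r : ℤ) p.1 with hSp
  set dg : F2 := lg u p.1 + lg v p.1 + Sp with hdg
  set xp : F2 := if p.1 ∣ a then 1 else 0 with hxp
  have hentry : (EMat D u v *ᵥ Phi D (a, b)) p
      = dg * xp + ∑ r ∈ (D.primeFactors.erase p.1).filter (· ∣ a), lg (r : ℤ) p.1 := by
    have hfun : ∀ q : {p // p ∈ D.primeFactors}, EMat D u v p q * Phi D (a, b) q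
        = (fun r : ℕ => (if r = p.1 then dg else lg (r : ℤ) p.1) * (if r ∣ a then 1 else 0)) q.1 := by
      intro q
      simp only [EMat, Phi]
      congr 1
      by_cases h : q = p
      · rw [if_pos h, if_pos (show q.1 = p.1 by rw [h])]
      · rw [if_neg h, if_neg (fun hh => h (Subtype.ext hh))]
    calc (EMat D u v *ᵥ Phi D (a, b)) p
        = ∑ q : {p // p ∈ D.primeFactors}, EMat D u v p q * Phi D (a, b) q := rfl
      _ = ∑ r ∈ D.primeFactors,
            (if r = p.1 then dg else lg (r : ℤ) p.1) * (if r ∣ a then 1 else 0) := by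
          rw [← Finset.sum_coe_sort D.primeFactors]
          exact Finset.sum_congr rfl (fun q _ => hfun q)
      _ = (if p.1 = p.1 then dg else lg (p.1 : ℤ) p.1) * (if p.1 ∣ a then 1 else 0)
            + ∑ r ∈ D.primeFactors.erase p.1,
              (if r = p.1 then dg else lg (r : ℤ) p.1) * (if r ∣ a then 1 else 0) :=
          (Finset.add_sum_erase _ _ p.2).symm
      _ = dg * xp + ∑ r ∈ D.primeFactors.erase p.1, (lg (r : ℤ) p.1) * (if r ∣ a then 1 else 0) := by
          rw [if_pos rfl]
          congr 1
          refine Finset.sum_congr rfl (fun r hr => ?_)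
          rw [if_neg (Finset.ne_of_mem_erase hr)]
      _ = dg * xp + ∑ r ∈ (D.primeFactors.erase p.1).filter (· ∣ a), lg (r : ℤ) p.1 := by
          congr 1
          rw [Finset.sum_filter]
          exact Finset.sum_congr rfl (fun r _ => by rw [mul_ite, mul_one, mul_zero])
  by_cases hpa : p.1 ∣ a
  · -- p divides a
    have hpb : ¬ p.1 ∣ b := fun h => hnotboth ⟨hpa, h⟩
    have hxp1 : xp = 1 := if_pos hpa
    -- split the erased sum into divisors of a and divisors of b
    have hsplitsum : Sp = (∑ r ∈ (D.primeFactors.erase p.1).filter (· ∣ a), lg (r : ℤ) p.1)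
        + ∑ r ∈ (D.primeFactors.erase p.1).filter (¬ · ∣ a), lg (r : ℤ) p.1 :=
      (Finset.sum_filter_add_sum_filter_not _ _ _).symm
    have hfilterb : (D.primeFactors.erase p.1).filter (¬ · ∣ a)
        = D.primeFactors.filter (· ∣ b) := by
      ext r
      simp only [Finset.mem_filter, Finset.mem_erase]
      constructor
      · rintro ⟨⟨hrp, hrD⟩, hra⟩
        refine ⟨hrD, ?_⟩
        have hr := Nat.mem_primeFactors.mp hrD
        rcases (Nat.Prime.dvd_mul hr.1).mp (hab ▸ hr.2.1) with h | h
        · exact absurd h hra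
        · exact h
      · rintro ⟨hrD, hrb⟩
        have hr := Nat.mem_primeFactors.mp hrD
        have hrp : r ≠ p.1 := by
          rintro rfl
          exact hpb hrb
        refine ⟨⟨hrp, hrD⟩, fun hra => ?_⟩
        exact hr.1.one_lt.ne' (Nat.eq_one_of_dvd_coprimes hcoab hra hrb)
    have hlgb : lg (b : ℤ) p.1 = ∑ r ∈ (D.primeFactors.erase p.1).filter (¬ · ∣ a), lg (r : ℤ) p.1 := by
      rw [hfilterb]
      exact lg_eq_sum hD0 hsq hbdvd hb.ne' pp hpb
    have hbgcd : Int.gcd (b : ℤ) p.1 = 1 := by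
      rw [Int.gcd_natCast_natCast]
      exact Nat.Coprime.symm (Nat.Coprime.coprime_dvd_left hpa hcoab)
    have hlgvb : lg (v * (b : ℤ)) p.1 = lg v p.1 + lg (b : ℤ) p.1 := lg_mul _ _ _ hvp hbgcd
    have h2 : Sp = (∑ r ∈ (D.primeFactors.erase p.1).filter (· ∣ a), lg (r : ℤ) p.1)
        + lg (b : ℤ) p.1 := by rw [hsplitsum, hlgb]
    rw [hentry, hxp1, hlgvb]
    simp only [rhsVec, hpa, hpb, forall_true_left, IsEmpty.forall_iff, and_true, true_implies,
      false_implies, and_true]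
    rw [hdg]
    set SA := ∑ r ∈ (D.primeFactors.erase p.1).filter (· ∣ a), lg (r : ℤ) p.1 with hSA
    constructor
    · intro h
      linear_combination h - h2 - f2_add_self SA
    · intro h
      linear_combination h + h2 + f2_add_self SA
  · -- p divides b
    have hpb : p.1 ∣ b := hdvd_or.resolve_left hpa
    have hxp0 : xp = 0 := if_neg hpa
    have hfiltera : (D.primeFactors.erase p.1).filter (· ∣ a) = D.primeFactors.filter (· ∣ a) := by
      ext r
      simp only [Finset.mem_filter, Finset.mem_erase]
      constructor
      · rintro ⟨⟨-, hrD⟩, hra⟩; exact ⟨hrD, hra⟩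
      · rintro ⟨hrD, hra⟩
        refine ⟨⟨?_, hrD⟩, hra⟩
        rintro rfl
        exact hpa hra
    have hlga : lg (a : ℤ) p.1 = ∑ r ∈ (D.primeFactors.erase p.1).filter (· ∣ a), lg (r : ℤ) p.1 := by
      rw [hfiltera]
      exact lg_eq_sum hD0 hsq hadvd ha.ne' pp hpa
    have hagcd : Int.gcd (a : ℤ) p.1 = 1 := by
      rw [Int.gcd_natCast_natCast]
      exact Nat.Coprime.symm (Nat.Coprime.coprime_dvd_left hpb hcoab.symm)
    have hlgua : lg (u * (a : ℤ)) p.1 = lg u p.1 + lg (a : ℤ) p.1 := lg_mul _ _ _ hup hagcd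
    rw [hentry, hxp0, mul_zero, zero_add, ← hlga, hlgua]
    simp only [rhsVec, hpa, hpb, IsEmpty.forall_iff, true_and, forall_true_left, true_implies,
      false_implies, true_and]
    constructor
    · intro h
      linear_combination h + f2_add_self (lg u p.1)
    · intro h
      linear_combination h - f2_add_self (lg u p.1)

end Translation


section Counting

open Matrix

lemma Ecard_eq_sol (D : ℕ) (hD : Odd D) (hsq : Squarefree D) (hpos : 0 < D)
    (u v : ℤ) (hu : IsCoprime u (D : ℤ)) (hv : IsCoprime v (D : ℤ)) :
    Ecard D u v = (sol (EMat D u v) (rhsVec D u)).ncard := by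
  classical
  have hD0 : D ≠ 0 := hpos.ne'
  set S : Set (ℕ × ℕ) := {p : ℕ × ℕ | 0 < p.1 ∧ 0 < p.2 ∧ p.1 * p.2 = D ∧
    (∃ n : ℤ, u * p.1 ≡ n ^ 2 [ZMOD (p.2 : ℤ)]) ∧
    (∃ n : ℤ, v * p.2 ≡ n ^ 2 [ZMOD (p.1 : ℤ)])} with hSdef
  -- generic facts about valid pairs
  have pairfacts : ∀ a b : ℕ, 0 < a → 0 < b → a * b = D →
      a ∣ D ∧ b ∣ D ∧ Nat.Coprime a b ∧ Squarefree a ∧ Squarefree b ∧ Odd a ∧ Odd b := by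
    intro a b ha hb hab
    have hsq' : Squarefree (a * b) := hab ▸ hsq
    obtain ⟨hco, hsa, hsb⟩ := Nat.squarefree_mul_iff.mp hsq'
    exact ⟨hab ▸ Dvd.intro b rfl, hab ▸ Dvd.intro_left a rfl, hco, hsa, hsb,
      hD.of_dvd_nat (hab ▸ Dvd.intro b rfl), hD.of_dvd_nat (hab ▸ Dvd.intro_left a rfl)⟩
  -- reconstruction of a from its Phi vector
  have recon : ∀ a b : ℕ, 0 < a → 0 < b → a * b = D →
      a = ∏ r ∈ D.primeFactors.filter (· ∣ a), r := by
    intro a b ha hb hab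
    obtain ⟨haD, -, -, hsa, -⟩ := pairfacts a b ha hb hab
    rw [primeFactors_filter_eq hD0 haD ha.ne', Nat.prod_primeFactors_of_squarefree hsa]
  -- conditions translate to membership in the solution set
  have cond_iff : ∀ a b : ℕ, 0 < a → 0 < b → a * b = D →
      (((∃ n : ℤ, u * a ≡ n ^ 2 [ZMOD (b : ℤ)]) ∧ (∃ n : ℤ, v * b ≡ n ^ 2 [ZMOD (a : ℤ)])) ↔
        EMat D u v *ᵥ Phi D (a, b) = rhsVec D u) := by
    intro a b ha hb hab
    obtain ⟨haD, hbD, hco, hsa, hsb, hoa, hob⟩ := pairfacts a b ha hb hab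
    have hcopab : IsCoprime ((a : ℤ)) (b : ℤ) := Nat.Coprime.isCoprime hco
    have hub : IsCoprime u (b : ℤ) := hu.of_isCoprime_of_dvd_right (Int.natCast_dvd_natCast.mpr hbD)
    have hva : IsCoprime v (a : ℤ) := hv.of_isCoprime_of_dvd_right (Int.natCast_dvd_natCast.mpr haD)
    have hsq1 := sq_mod_iff b hsb hob (u * a) (hub.mul_left hcopab)
    have hsq2 := sq_mod_iff a hsa hoa (v * b) (hva.mul_left hcopab.symm)
    rw [hsq1, hsq2, funext_iff]
    -- gcd facts for primes
    have key : ∀ p : {p // p ∈ D.primeFactors},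
        ((p.1 ∣ a → lg (v * (b : ℤ)) p.1 = 0) ∧ (p.1 ∣ b → lg (u * (a : ℤ)) p.1 = 0)) ↔
        ((p.1 ∣ a → jacobiSym (v * b) p.1 = 1) ∧ (p.1 ∣ b → jacobiSym (u * a) p.1 = 1)) := by
      intro p
      obtain ⟨pp, pdvd, -⟩ := Nat.mem_primeFactors.mp p.2
      constructor
      · rintro ⟨h1, h2⟩
        constructor
        · intro hpa
          have hgcd : Int.gcd (v * b) p.1 = 1 := by
            rw [← Int.isCoprime_iff_gcd_eq_one]
            exact IsCoprime.mul_left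
              (hva.of_isCoprime_of_dvd_right (Int.natCast_dvd_natCast.mpr hpa))
              (Nat.Coprime.isCoprime (Nat.Coprime.symm (Nat.Coprime.coprime_dvd_left hpa hco)))
          exact (lg_eq_zero_iff _ _ hgcd).mp (h1 hpa)
        · intro hpb
          have hgcd : Int.gcd (u * a) p.1 = 1 := by
            rw [← Int.isCoprime_iff_gcd_eq_one]
            exact IsCoprime.mul_left
              (hub.of_isCoprime_of_dvd_right (Int.natCast_dvd_natCast.mpr hpb))
              (Nat.Coprime.isCoprime (Nat.Coprime.symm (Nat.Coprime.coprime_dvd_left hpb hco.symm)))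
          exact (lg_eq_zero_iff _ _ hgcd).mp (h2 hpb)
      · rintro ⟨h1, h2⟩
        constructor
        · intro hpa
          have hgcd : Int.gcd (v * b) p.1 = 1 := by
            rw [← Int.isCoprime_iff_gcd_eq_one]
            exact IsCoprime.mul_left
              (hva.of_isCoprime_of_dvd_right (Int.natCast_dvd_natCast.mpr hpa))
              (Nat.Coprime.isCoprime (Nat.Coprime.symm (Nat.Coprime.coprime_dvd_left hpa hco)))
          exact (lg_eq_zero_iff _ _ hgcd).mpr (h1 hpa)
        · intro hpb
          have hgcd : Int.gcd (u * a) p.1 = 1 := by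
            rw [← Int.isCoprime_iff_gcd_eq_one]
            exact IsCoprime.mul_left
              (hub.of_isCoprime_of_dvd_right (Int.natCast_dvd_natCast.mpr hpb))
              (Nat.Coprime.isCoprime (Nat.Coprime.symm (Nat.Coprime.coprime_dvd_left hpb hco.symm)))
          exact (lg_eq_zero_iff _ _ hgcd).mpr (h2 hpb)
    constructor
    · rintro ⟨h1, h2⟩ p
      rw [mulVec_Phi hD hsq u v hu hv a b ha hb hab p, key p]
      constructor
      · intro hpa
        refine h2 _ (Nat.mem_primeFactors.mpr ⟨(Nat.mem_primeFactors.mp p.2).1, hpa, ha.ne'⟩)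
      · intro hpb
        refine h1 _ (Nat.mem_primeFactors.mpr ⟨(Nat.mem_primeFactors.mp p.2).1, hpb, hb.ne'⟩)
    · intro h
      constructor
      · intro q hq
        obtain ⟨hqp, hqb, -⟩ := Nat.mem_primeFactors.mp hq
        have hqD : q ∈ D.primeFactors := Nat.mem_primeFactors.mpr ⟨hqp, hqb.trans hbD, hD0⟩
        have := (mulVec_Phi hD hsq u v hu hv a b ha hb hab ⟨q, hqD⟩).mp (h ⟨q, hqD⟩)
        exact ((key ⟨q, hqD⟩).mp this).2 hqb
      · intro q hq
        obtain ⟨hqp, hqa, -⟩ := Nat.mem_primeFactors.mp hq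
        have hqD : q ∈ D.primeFactors := Nat.mem_primeFactors.mpr ⟨hqp, hqa.trans haD, hD0⟩
        have := (mulVec_Phi hD hsq u v hu hv a b ha hb hab ⟨q, hqD⟩).mp (h ⟨q, hqD⟩)
        exact ((key ⟨q, hqD⟩).mp this).1 hqa
  -- injectivity of Phi on S
  have hinj : Set.InjOn (Phi D) S := by
    rintro ⟨a, b⟩ hab ⟨a', b'⟩ hab' heq
    obtain ⟨ha, hb, habD, -, -⟩ := hab
    obtain ⟨ha', hb', habD', -, -⟩ := hab'
    have hfil : D.primeFactors.filter (· ∣ a) = D.primeFactors.filter (· ∣ a') := by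
      ext r
      simp only [Finset.mem_filter]
      constructor
      · rintro ⟨hrD, hra⟩
        refine ⟨hrD, ?_⟩
        have := congrFun heq ⟨r, hrD⟩
        simp only [Phi] at this
        rw [if_pos hra] at this
        by_contra hra'
        rw [if_neg hra'] at this
        exact one_ne_zero this
      · rintro ⟨hrD, hra⟩
        refine ⟨hrD, ?_⟩
        have := congrFun heq ⟨r, hrD⟩
        simp only [Phi] at this
        rw [if_pos hra] at this
        by_contra hra2
        rw [if_neg hra2] at this
        exact one_ne_zero this.symm
    have haa : a = a' := by
      rw [recon a b ha hb habD, recon a' b' ha' hb' habD', hfil]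
    have hbb : b = b' := by
      apply Nat.eq_of_mul_eq_mul_left ha
      rw [habD, haa, habD']
    rw [Prod.mk.injEq]
    exact ⟨haa, hbb⟩
  -- image equality
  have himg : Phi D '' S = sol (EMat D u v) (rhsVec D u) := by
    ext x
    constructor
    · rintro ⟨⟨a, b⟩, ⟨ha, hb, habD, h1, h2⟩, rfl⟩
      exact (cond_iff a b ha hb habD).mp ⟨h1, h2⟩
    · intro hx
      set a : ℕ := ∏ q ∈ Finset.univ.filter (fun q : {p // p ∈ D.primeFactors} => x q = 1), q.1
        with hadef
      have haD : a ∣ D := by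
        calc a ∣ ∏ q : {p // p ∈ D.primeFactors}, q.1 :=
              Finset.prod_dvd_prod_of_subset _ _ _ (Finset.filter_subset _ _)
          _ = ∏ r ∈ D.primeFactors, r := Finset.prod_coe_sort D.primeFactors (fun r => r)
          _ = D := Nat.prod_primeFactors_of_squarefree hsq
      have ha : 0 < a := by
        apply Finset.prod_pos
        intro q hq
        exact (Nat.mem_primeFactors.mp q.2).1.pos
      set b : ℕ := D / a with hbdef
      have habD : a * b = D := Nat.mul_div_cancel' haD
      have hb : 0 < b := by
        rcases Nat.eq_zero_or_pos b with h | h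
        · rw [h, mul_zero] at habD; omega
        · exact h
      have hphi : Phi D (a, b) = x := by
        funext p
        have hiff : p.1 ∣ a ↔ x p = 1 := by
          constructor
          · intro hpa
            rw [hadef] at hpa
            have hpp : Prime p.1 := (Nat.mem_primeFactors.mp p.2).1.prime
            obtain ⟨q, hq, hpq⟩ := (Prime.dvd_finset_prod_iff hpp _).mp hpa
            rw [Finset.mem_filter] at hq
            have hqpf : Nat.Prime q.1 := (Nat.mem_primeFactors.mp q.2).1
            have hpq' : p = q := Subtype.ext
              ((Nat.prime_dvd_prime_iff_eq (Nat.mem_primeFactors.mp p.2).1 hqpf).mp hpq)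
            rw [hpq']
            exact hq.2
          · intro hx1
            exact Finset.dvd_prod_of_mem _ (Finset.mem_filter.mpr ⟨Finset.mem_univ _, hx1⟩)
        simp only [Phi]
        rcases zmod2_cases (x p) with h | h
        · rw [h, if_neg]
          intro hpa
          rw [hiff.mp hpa] at h
          exact one_ne_zero h
        · rw [h, if_pos (hiff.mpr h)]
      refine ⟨(a, b), ?_, hphi⟩
      have hc := (cond_iff a b ha hb habD).mpr (by rw [hphi]; exact hx)
      exact ⟨ha, hb, habD, hc.1, hc.2⟩
  calc Ecard D u v = S.ncard := rfl
    _ = (Phi D '' S).ncard := (Set.ncard_image_of_injOn hinj).symm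
    _ = (sol (EMat D u v) (rhsVec D u)).ncard := by rw [himg]

end Counting


section Assembly

open Matrix

variable {D : ℕ}

lemma gcd_neg_one (p : ℕ) : Int.gcd (-1) p = 1 := by simp [Int.gcd]

lemma gcd_two_of_odd {p : ℕ} (h : Odd p) : Int.gcd 2 p = 1 := by
  have : Nat.Coprime 2 p := Nat.coprime_two_left.mpr h
  simpa [Int.gcd] using this

lemma lg_neg_two {p : ℕ} (h : Odd p) : lg (-2) p = lg (-1) p + lg 2 p := by
  rw [show (-2 : ℤ) = -1 * 2 by norm_num]
  exact lg_mul _ _ _ (gcd_neg_one p) (gcd_two_of_odd h)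

lemma podd_of_mem (hD : Odd D) {p : ℕ} (hp : p ∈ D.primeFactors) : Odd p :=
  hD.of_dvd_nat (Nat.mem_primeFactors.mp hp).2.1

lemma EMat_neg_one_two (hD : Odd D) : EMat D (-1) 2 = EMat D (-2) 1 := by
  ext p q
  simp only [EMat]
  by_cases h : q = p
  · rw [if_pos h, if_pos h, lg_neg_two (podd_of_mem hD p.2), lg_one]
    ring
  · rw [if_neg h, if_neg h]

lemma EMat_two_one (hD : Odd D) :
    EMat D 2 1 = EMat D (-2) 1 + Matrix.diagonal (rhsVec D (-1)) := by
  ext p q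
  simp only [EMat, Matrix.add_apply]
  by_cases h : q = p
  · rw [if_pos h, if_pos h, h, Matrix.diagonal_apply_eq, lg_neg_two (podd_of_mem hD p.2), lg_one,
      rhsVec]
    ring_nf
    rw [show (2 : F2) = 0 by decide]
    ring
  · rw [if_neg h, if_neg h, Matrix.diagonal_apply_ne _ (fun hh => h hh.symm), add_zero]

lemma rhsVec_neg_two (hD : Odd D) : rhsVec D (-2) = rhsVec D (-1) + rhsVec D 2 := by
  funext p
  simp only [rhsVec, Pi.add_apply]
  exact lg_neg_two (podd_of_mem hD p.2)

lemma EMat_mulVec_one (hD : Odd D) :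
    EMat D (-2) 1 *ᵥ 1 = rhsVec D (-1) + rhsVec D 2 := by
  funext p
  have : (EMat D (-2) 1 *ᵥ 1) p = ∑ q : {p // p ∈ D.primeFactors}, EMat D (-2) 1 p q := by
    simp [Matrix.mulVec, dotProduct]
  rw [this]
  have h2 : ∑ q : {p // p ∈ D.primeFactors}, EMat D (-2) 1 p q
      = ∑ r ∈ D.primeFactors,
        (if r = p.1 then lg (-2) p.1 + lg 1 p.1 + ∑ r' ∈ D.primeFactors.erase p.1, lg (r' : ℤ) p.1
          else lg (r : ℤ) p.1) := by
    rw [← Finset.sum_coe_sort D.primeFactors]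
    refine Finset.sum_congr rfl (fun q _ => ?_)
    simp only [EMat]
    by_cases h : q = p
    · rw [if_pos h, if_pos (show q.1 = p.1 by rw [h])]
    · rw [if_neg h, if_neg (fun hh => h (Subtype.ext hh))]
  rw [h2, ← Finset.add_sum_erase _ _ p.2, if_pos rfl]
  have h3 : ∑ r ∈ D.primeFactors.erase p.1,
      (if r = p.1 then lg (-2) p.1 + lg 1 p.1 + ∑ r' ∈ D.primeFactors.erase p.1, lg (r' : ℤ) p.1
        else lg (r : ℤ) p.1) = ∑ r ∈ D.primeFactors.erase p.1, lg (r : ℤ) p.1 :=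
    Finset.sum_congr rfl (fun r hr => by rw [if_neg (Finset.ne_of_mem_erase hr)])
  rw [h3, lg_one, lg_neg_two (podd_of_mem hD p.2)]
  simp only [Pi.add_apply, rhsVec]
  ring_nf
  rw [show (2 : F2) = 0 by decide]
  ring

lemma EMat_transpose (hD : Odd D) :
    (EMat D (-2) 1)ᵀ = EMat D (-2) 1
      + Matrix.vecMulVec (rhsVec D (-1)) (rhsVec D (-1)) + Matrix.diagonal (rhsVec D (-1)) := by
  ext p q
  simp only [Matrix.transpose_apply, Matrix.add_apply, Matrix.vecMulVec_apply, EMat, rhsVec]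
  by_cases h : q = p
  · rw [h, if_pos rfl, Matrix.diagonal_apply_eq]
    have : lg (-1) p.1 * lg (-1) p.1 + lg (-1) p.1 = 0 := by
      rcases zmod2_cases (lg (-1) p.1) with hh | hh <;> rw [hh] <;> decide
    simp only [rhsVec]
    linear_combination -this
  · have h' : ¬ p = q := fun hh => h hh.symm
    rw [if_neg h, if_neg h', Matrix.diagonal_apply_ne _ h', add_zero]
    obtain ⟨pp, -, -⟩ := Nat.mem_primeFactors.mp p.2
    obtain ⟨qq, -, -⟩ := Nat.mem_primeFactors.mp q.2
    have hne : p.1 ≠ q.1 := fun hh => h (Subtype.ext hh.symm)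
    rw [lg_reciprocity p.1 q.1 pp qq (podd_of_mem hD p.2) (podd_of_mem hD q.2) hne]

end Assembly

theorem Ecard_ineq_general (D : ℕ) (hD : Odd D) (hsq : Squarefree D) (hpos : 0 < D) :
    Ecard D (-2) 1 + Ecard D (-1) 2 ≤ 2 * Ecard D 2 1 ∧
      2 * Ecard D 2 1 ≤ 2 * Ecard D (-2) 1 + 2 * Ecard D (-1) 2 := by
  classical
  have hco2 : IsCoprime (2 : ℤ) (D : ℤ) := by
    rw [Int.isCoprime_iff_gcd_eq_one]
    exact gcd_two_of_odd hD
  have hcon2 : IsCoprime (-2 : ℤ) (D : ℤ) := hco2.neg_left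
  have hcon1 : IsCoprime (-1 : ℤ) (D : ℤ) := (isCoprime_one_left).neg_left
  have hco1 : IsCoprime (1 : ℤ) (D : ℤ) := isCoprime_one_left
  set A := EMat D (-2) 1 with hA
  set ε := rhsVec D (-1) with hε
  set δ := rhsVec D 2 with hδ
  have E1 : Ecard D (-2) 1 = (sol A (ε + δ)).ncard := by
    rw [Ecard_eq_sol D hD hsq hpos (-2) 1 hcon2 hco1, ← rhsVec_neg_two hD]
  have E2 : Ecard D (-1) 2 = (sol A ε).ncard := by
    rw [Ecard_eq_sol D hD hsq hpos (-1) 2 hcon1 hco2, EMat_neg_one_two hD]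
  have E3 : Ecard D 2 1 = (sol (A + Matrix.diagonal ε) δ).ncard := by
    rw [Ecard_eq_sol D hD hsq hpos 2 1 hco2 hco1, EMat_two_one hD]
  have main := abstract_ineq A ε δ (EMat_mulVec_one hD) (EMat_transpose hD)
  rw [E1, E2, E3]
  omega
end

section
/- Let D be a positive odd squarefree integer with D ≡ 3 (mod 4), all of whose prime divisors are congruent to ±1 modulo 8. Then E_D(-2,2) ≠ 0, where E_D(u,v) = #{(a,b): D = ab, ua ≡ □ (mod b), vb ≡ □ (mod a)}. -/
open Finset

-- auxiliary lemma
lemma isSquare_two_zmod (D : ℕ) (hsq : Squarefree D)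
    (hp : ∀ p : ℕ, p.Prime → p ∣ D → p % 8 = 1 ∨ p % 8 = 7) :
    IsSquare (2 : ZMod D) := by
  induction D using Nat.recOnPosPrimePosCoprime with
  | prime_pow p n hpp hn =>
    rcases Nat.lt_or_ge n 2 with h | h
    · interval_cases n
      haveI : Fact p.Prime := ⟨hpp⟩
      have hp8 := hp p hpp (by simp)
      have hp2 : p ≠ 2 := by rcases hp8 with h | h <;> omega
      rw [pow_one]
      exact (ZMod.exists_sq_eq_two_iff hp2).mpr hp8
    · exact absurd (hsq p (by rw [← sq]; exact pow_dvd_pow p h)) hpp.prime.not_isUnit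
  | zero => exact absurd hsq not_squarefree_zero
  | one => exact ⟨0, Subsingleton.elim _ _⟩
  | coprime a b ha hb hab iha ihb =>
    have h2a := iha (hsq.squarefree_of_dvd ⟨b, rfl⟩)
      (fun p pp pd => hp p pp (pd.trans ⟨b, rfl⟩))
    have h2b := ihb (hsq.squarefree_of_dvd ⟨a, mul_comm a b⟩)
      (fun p pp pd => hp p pp (pd.trans ⟨a, mul_comm a b⟩))
    obtain ⟨r, hr⟩ := h2a
    obtain ⟨s, hs⟩ := h2b
    have φ := ZMod.chineseRemainder hab
    refine ⟨φ.symm (r, s), ?_⟩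
    have : φ.symm ((2 : ZMod a), (2 : ZMod b)) = (2 : ZMod (a*b)) := by
      have h2 := φ.symm_apply_apply (2 : ZMod (a*b))
      rw [show φ (2 : ZMod (a*b)) = ((2 : ZMod a), (2 : ZMod b)) by
        exact Prod.ext (by simp [map_ofNat]) (by simp [map_ofNat])] at h2
      exact h2
    rw [← this, ← map_mul]
    congr 1
    exact Prod.ext hr hs

theorem Ecard_neg_two_two_ne_zero (D : ℕ) (hD : Odd D) (hsq : Squarefree D) (hpos : 0 < D)
    (hmod : D % 4 = 3) (hp : ∀ p : ℕ, p.Prime → p ∣ D → p % 8 = 1 ∨ p % 8 = 7) :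
    Ecard D (-2) 2 ≠ 0 := by
  have key : IsSquare (2 : ZMod D) := isSquare_two_zmod D hsq hp
  unfold Ecard
  have hfin : ({p : ℕ × ℕ | 0 < p.1 ∧ 0 < p.2 ∧ p.1 * p.2 = D ∧
      (∃ n : ℤ, (-2) * p.1 ≡ n ^ 2 [ZMOD (p.2 : ℤ)]) ∧
      (∃ n : ℤ, 2 * p.2 ≡ n ^ 2 [ZMOD (p.1 : ℤ)])}).Finite := by
    apply Set.Finite.subset (Nat.divisorsAntidiagonal D).finite_toSet
    rintro ⟨a, b⟩ ⟨ha, hb, hab, -⟩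
    simp [Nat.mem_divisorsAntidiagonal, hab, hpos.ne']
  have hmem : (D, (1 : ℕ)) ∈ {p : ℕ × ℕ | 0 < p.1 ∧ 0 < p.2 ∧ p.1 * p.2 = D ∧
      (∃ n : ℤ, (-2) * p.1 ≡ n ^ 2 [ZMOD (p.2 : ℤ)]) ∧
      (∃ n : ℤ, 2 * p.2 ≡ n ^ 2 [ZMOD (p.1 : ℤ)])} := by
    refine ⟨hpos, one_pos, mul_one D, ⟨0, ?_⟩, ?_⟩
    · exact Int.modEq_one
    · obtain ⟨r, hr⟩ := key
      haveI : NeZero D := ⟨hpos.ne'⟩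
      refine ⟨(r.val : ℤ), ?_⟩
      have : ((2 * (1:ℕ) : ℤ) : ZMod D) = (((r.val : ℤ))^2 : ℤ) := by
        push_cast
        rw [ZMod.natCast_val, ZMod.cast_id, sq, ← hr]
      exact (ZMod.intCast_eq_intCast_iff _ _ _).mp (by push_cast at this ⊢; exact this)
  exact ((Set.ncard_pos hfin).mpr ⟨_, hmem⟩).ne'
end
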